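/- arXiv:0709.2812 — 2 statements merged into one kernel-verified Lean document; each statement's English description precedes it below -/
import Mathlib

section
/- Let 𝓗 be a nonzero complex Hilbert space, let A be a bounded self-adjoint operator on 𝓗 with re⟨φ, Aφ⟩ ≥ 0 for all φ ∈ 𝓗, and let B₁, B₂, B₃ be bounded self-adjoint operators on 𝓗 such that ‖B₁φ‖² + ‖B₂φ‖² + ‖B₃φ‖² ≤ 2·re⟨φ, Aφ⟩ for all φ ∈ 𝓗. Set E := inf{ re⟨φ, Aφ⟩ : φ ∈ 𝓗, ‖φ‖ = 1 }, and assume √(2E) ≤ 1/3 + c for some real c ≥ 0. Then for every nonzero vector k = (k₁,k₂,k₃) ∈ ℝ³ and every unit vector φ ∈ 𝓗: re⟨φ, Aφ⟩ + k₁·re⟨φ, B₁φ⟩ + k₂·re⟨φ, B₂φ⟩ + k₃·re⟨φ, B₃φ⟩ + |k|²/2 > E − (1/3 + c)·|k|. -/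
/-!
Write `a = re⟨φ, Aφ⟩`, `bᵢ = re⟨φ, Bᵢφ⟩`, `r = |k|`, `x = √(2a)` and `s = √(2E) ≤ x`.
Cauchy–Schwarz, first in `𝓗` and then in `ℝ³`, gives `Σᵢ kᵢ bᵢ ≥ -r x`, so the left-hand
side is at least `(x - r)² / 2`. Minimising over `x ≥ s`, this exceeds `s² / 2 - (1/3 + c) r`:
for `s ≤ r` because `s² ≤ s r ≤ (1/3 + c) r`, for `s > r` because `(x - r)² ≥ (s - r)²`.
-/

open RCLike in
theorem sq_re_inner_le_norm_sq {𝕜 E : Type*} [RCLike 𝕜] [NormedAddCommGroup E]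
    [InnerProductSpace 𝕜 E] (x y : E) :
    (re (inner 𝕜 x y)) ^ 2 ≤ ‖x‖ ^ 2 * ‖y‖ ^ 2 := by
  rw [← mul_pow]
  refine sq_le_sq' ?_ ?_ <;>
    linarith [abs_le.mp ((abs_re_le_norm (inner 𝕜 x y)).trans (norm_inner_le_norm x y))]

theorem abs_mul_add_mul_add_mul_le (k₁ k₂ k₃ b₁ b₂ b₃ : ℝ) :
    |k₁ * b₁ + k₂ * b₂ + k₃ * b₃|
      ≤ √(k₁ ^ 2 + k₂ ^ 2 + k₃ ^ 2) * √(b₁ ^ 2 + b₂ ^ 2 + b₃ ^ 2) := by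
  rw [← Real.sqrt_mul (by positivity)]
  refine Real.abs_le_sqrt ?_
  nlinarith [sq_nonneg (k₁ * b₂ - k₂ * b₁), sq_nonneg (k₁ * b₃ - k₃ * b₁),
    sq_nonneg (k₂ * b₃ - k₃ * b₂)]

theorem sq_sub_two_mul_lt_sq_sub {r s t x : ℝ} (hr : 0 < r) (hs : 0 ≤ s) (hsx : s ≤ x)
    (hst : s ≤ t) (ht : 0 < t) :
    s ^ 2 - 2 * t * r < (x - r) ^ 2 := by
  rcases le_or_gt s r with hsr | hrs
  · nlinarith [sq_nonneg (x - r), mul_pos ht hr, mul_le_mul hsr hst hs hr.le]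
  · nlinarith [mul_nonneg (sub_nonneg.mpr hsx) (by linarith : 0 ≤ x + s - 2 * r),
      mul_le_mul_of_nonneg_right hst hr.le]

theorem stmt_2_general {𝓗 : Type*} [NormedAddCommGroup 𝓗] [InnerProductSpace ℂ 𝓗]
    (A B₁ B₂ B₃ : 𝓗 →L[ℂ] 𝓗)
    (hApos : ∀ φ : 𝓗, 0 ≤ (inner ℂ φ (A φ) : ℂ).re)
    (hbound : ∀ φ : 𝓗,
      ‖B₁ φ‖ ^ 2 + ‖B₂ φ‖ ^ 2 + ‖B₃ φ‖ ^ 2 ≤ 2 * (inner ℂ φ (A φ) : ℂ).re)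
    (E : ℝ)
    (hE : E = sInf {x : ℝ | ∃ φ : 𝓗, ‖φ‖ = 1 ∧ x = (inner ℂ φ (A φ) : ℂ).re})
    (c : ℝ) (hc : 0 ≤ c) (hEc : Real.sqrt (2 * E) ≤ 1 / 3 + c)
    (k₁ k₂ k₃ : ℝ) (hk : ¬(k₁ = 0 ∧ k₂ = 0 ∧ k₃ = 0))
    (φ : 𝓗) (hφ : ‖φ‖ = 1) :
    (inner ℂ φ (A φ) : ℂ).re + k₁ * (inner ℂ φ (B₁ φ) : ℂ).re
        + k₂ * (inner ℂ φ (B₂ φ) : ℂ).re + k₃ * (inner ℂ φ (B₃ φ) : ℂ).re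
        + (k₁ ^ 2 + k₂ ^ 2 + k₃ ^ 2) / 2
      > E - (1 / 3 + c) * Real.sqrt (k₁ ^ 2 + k₂ ^ 2 + k₃ ^ 2) := by
  set a := (inner ℂ φ (A φ) : ℂ).re
  set b₁ := (inner ℂ φ (B₁ φ) : ℂ).re
  set b₂ := (inner ℂ φ (B₂ φ) : ℂ).re
  set b₃ := (inner ℂ φ (B₃ φ) : ℂ).re
  set r := √(k₁ ^ 2 + k₂ ^ 2 + k₃ ^ 2)
  have hEa : E ≤ a := hE ▸ csInf_le ⟨0, by rintro _ ⟨ψ, -, rfl⟩; exact hApos ψ⟩ ⟨φ, hφ, rfl⟩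
  have hE0 : 0 ≤ E := hE ▸ Real.sInf_nonneg (by rintro _ ⟨ψ, -, rfl⟩; exact hApos ψ)
  have hre (T : 𝓗 →L[ℂ] 𝓗) : (inner ℂ φ (T φ) : ℂ).re ^ 2 ≤ ‖T φ‖ ^ 2 := by
    simpa [hφ] using sq_re_inner_le_norm_sq (𝕜 := ℂ) φ (T φ)
  have hkb : -(r * √(2 * a)) ≤ k₁ * b₁ + k₂ * b₂ + k₃ * b₃ := by
    have hb : b₁ ^ 2 + b₂ ^ 2 + b₃ ^ 2 ≤ 2 * a := by linarith [hre B₁, hre B₂, hre B₃, hbound φ]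
    calc -(r * √(2 * a)) ≤ -(r * √(b₁ ^ 2 + b₂ ^ 2 + b₃ ^ 2)) := by gcongr
      _ ≤ -|k₁ * b₁ + k₂ * b₂ + k₃ * b₃| := neg_le_neg (abs_mul_add_mul_add_mul_le ..)
      _ ≤ _ := neg_abs_le _
  have hr : 0 < r := by
    refine Real.sqrt_pos.mpr (lt_of_le_of_ne (by positivity) fun h => hk ?_)
    refine ⟨?_, ?_, ?_⟩ <;> nlinarith [sq_nonneg k₁, sq_nonneg k₂, sq_nonneg k₃]
  have hmin := sq_sub_two_mul_lt_sq_sub hr (Real.sqrt_nonneg _) (Real.sqrt_le_sqrt (by linarith))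
    hEc (by positivity) (x := √(2 * a))
  rw [Real.sq_sqrt (by positivity)] at hmin
  linarith [Real.sq_sqrt (by positivity : 0 ≤ k₁ ^ 2 + k₂ ^ 2 + k₃ ^ 2),
    Real.sq_sqrt (by linarith : 0 ≤ 2 * a)]

/-- abstract operator-theoretic form of the spectral estimate (I4).
`𝓗` is a nonzero complex Hilbert space, `A` a bounded self-adjoint operator with
nonnegative quadratic form, `B₁, B₂, B₃` bounded self-adjoint operators with
`‖B₁φ‖² + ‖B₂φ‖² + ‖B₃φ‖² ≤ 2·re⟨φ, Aφ⟩`. With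
`E = inf { re⟨φ, Aφ⟩ : ‖φ‖ = 1 }` and `√(2E) ≤ 1/3 + c`, for every nonzero
`k = (k₁,k₂,k₃) ∈ ℝ³` and unit vector `φ`:
`re⟨φ, Aφ⟩ + Σᵢ kᵢ·re⟨φ, Bᵢφ⟩ + |k|²/2 > E − (1/3 + c)·|k|`. -/
theorem stmt_2 {𝓗 : Type*} [NormedAddCommGroup 𝓗] [InnerProductSpace ℂ 𝓗]
    [CompleteSpace 𝓗] [Nontrivial 𝓗]
    (A B₁ B₂ B₃ : 𝓗 →L[ℂ] 𝓗)
    (hA : IsSelfAdjoint A) (hB₁ : IsSelfAdjoint B₁)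
    (hB₂ : IsSelfAdjoint B₂) (hB₃ : IsSelfAdjoint B₃)
    (hApos : ∀ φ : 𝓗, 0 ≤ (inner ℂ φ (A φ) : ℂ).re)
    (hbound : ∀ φ : 𝓗,
      ‖B₁ φ‖ ^ 2 + ‖B₂ φ‖ ^ 2 + ‖B₃ φ‖ ^ 2 ≤ 2 * (inner ℂ φ (A φ) : ℂ).re)
    (E : ℝ)
    (hE : E = sInf {x : ℝ | ∃ φ : 𝓗, ‖φ‖ = 1 ∧ x = (inner ℂ φ (A φ) : ℂ).re})
    (c : ℝ) (hc : 0 ≤ c) (hEc : Real.sqrt (2 * E) ≤ 1 / 3 + c)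
    (k₁ k₂ k₃ : ℝ) (hk : ¬(k₁ = 0 ∧ k₂ = 0 ∧ k₃ = 0))
    (φ : 𝓗) (hφ : ‖φ‖ = 1) :
    (inner ℂ φ (A φ) : ℂ).re + k₁ * (inner ℂ φ (B₁ φ) : ℂ).re
        + k₂ * (inner ℂ φ (B₂ φ) : ℂ).re + k₃ * (inner ℂ φ (B₃ φ) : ℂ).re
        + (k₁ ^ 2 + k₂ ^ 2 + k₃ ^ 2) / 2
      > E - (1 / 3 + c) * Real.sqrt (k₁ ^ 2 + k₂ ^ 2 + k₃ ^ 2) :=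
  stmt_2_general A B₁ B₂ B₃ hApos hbound E hE c hc hEc k₁ k₂ k₃ hk φ hφ
end

section
/- Let E ∈ ℝ and g > 0, and let μ be a finite Borel measure on ℝ whose support is contained in [E + g, ∞). Then for all complex numbers z and z' with |z − E| ≤ g/2 and |z' − E| ≤ g/2 one has ∫ |λ − z'|⁻¹ dμ(λ) ≤ 6·| ∫ (λ − z)⁻¹ dμ(λ) |. -/
/-!
On the support of `μ` the points `λ - z` lie in the sector `|im w| ≤ re w`, which is stable under
inversion and on which `‖w‖ ≤ 2 re w`; integrating, `∫ |λ - z|⁻¹ dμ ≤ 2 re ∫ (λ - z)⁻¹ dμ`.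
Since `|z - z'| ≤ g ≤ 2 |λ - z'|` there, also `|λ - z| ≤ 3 |λ - z'|`, which accounts for the
remaining factor `3`.
-/

open MeasureTheory

namespace Complex

theorem norm_le_two_mul_re_of_abs_im_le_re {w : ℂ} (h : |w.im| ≤ w.re) : ‖w‖ ≤ 2 * w.re := by
  linarith [norm_le_abs_re_add_abs_im w, abs_of_nonneg ((abs_nonneg _).trans h)]

theorem abs_im_inv_le_re_inv_of_abs_im_le_re {w : ℂ} (h : |w.im| ≤ w.re) :
    |(w⁻¹).im| ≤ (w⁻¹).re := by
  rw [inv_im, inv_re, neg_div, abs_neg, abs_div, abs_of_nonneg (normSq_nonneg w)]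
  exact div_le_div_of_nonneg_right h (normSq_nonneg w)

end Complex

theorem integral_norm_le_two_mul_norm_integral_of_abs_im_le_re {α : Type*} [MeasurableSpace α]
    {μ : Measure α} {f : α → ℂ} (hf : Integrable f μ) (h : ∀ᵐ x ∂μ, |(f x).im| ≤ (f x).re) :
    ∫ x, ‖f x‖ ∂μ ≤ 2 * ‖∫ x, f x ∂μ‖ :=
  calc ∫ x, ‖f x‖ ∂μ
      ≤ ∫ x, 2 * (f x).re ∂μ :=
        integral_mono_ae hf.norm (hf.re.const_mul 2) <|
          h.mono fun _ hx ↦ Complex.norm_le_two_mul_re_of_abs_im_le_re hx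
    _ = 2 * (∫ x, f x ∂μ).re := by
        rw [integral_const_mul, ← RCLike.re_to_complex, ← integral_re hf]
        rfl
    _ ≤ 2 * ‖∫ x, f x ∂μ‖ := by gcongr; exact Complex.re_le_norm _

section SpectralGap

variable {E g l : ℝ} {z z' : ℂ}

theorem half_gap_le_re_ofReal_sub (hz : ‖z - E‖ ≤ g / 2) (hl : E + g ≤ l) :
    g / 2 ≤ ((l : ℂ) - z).re := by
  have := (Complex.re_le_norm _).trans hz
  simp only [Complex.sub_re, Complex.ofReal_re] at this ⊢
  linarith

theorem abs_im_ofReal_sub_le_re (hz : ‖z - E‖ ≤ g / 2) (hl : E + g ≤ l) :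
    |((l : ℂ) - z).im| ≤ ((l : ℂ) - z).re := by
  have := (Complex.abs_im_le_norm (z - E)).trans hz
  simp only [Complex.sub_im, Complex.ofReal_im, zero_sub, abs_neg, sub_zero] at this ⊢
  linarith [half_gap_le_re_ofReal_sub hz hl]

theorem half_gap_le_norm_ofReal_sub (hz : ‖z - E‖ ≤ g / 2) (hl : E + g ≤ l) :
    g / 2 ≤ ‖(l : ℂ) - z‖ :=
  (half_gap_le_re_ofReal_sub hz hl).trans (Complex.re_le_norm _)

theorem norm_ofReal_sub_le_three_mul (hz : ‖z - E‖ ≤ g / 2) (hz' : ‖z' - E‖ ≤ g / 2)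
    (hl : E + g ≤ l) : ‖(l : ℂ) - z‖ ≤ 3 * ‖(l : ℂ) - z'‖ := by
  have hzz' : ‖z' - z‖ ≤ g := by
    linarith [norm_sub_le_norm_sub_add_norm_sub z' E z, norm_sub_rev (E : ℂ) z]
  linarith [norm_sub_le_norm_sub_add_norm_sub (l : ℂ) z' z, half_gap_le_norm_ofReal_sub hz' hl]

theorem inv_norm_ofReal_sub_le_three_mul_norm_inv (hg : 0 < g) (hz : ‖z - E‖ ≤ g / 2)
    (hz' : ‖z' - E‖ ≤ g / 2) (hl : E + g ≤ l) : ‖(l : ℂ) - z'‖⁻¹ ≤ 3 * ‖((l : ℂ) - z)⁻¹‖ := by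
  have hpos : 0 < ‖(l : ℂ) - z‖ / 3 := by linarith [half_gap_le_norm_ofReal_sub hz hl]
  calc ‖(l : ℂ) - z'‖⁻¹
      ≤ (‖(l : ℂ) - z‖ / 3)⁻¹ :=
        inv_anti₀ hpos (by linarith [norm_ofReal_sub_le_three_mul hz hz' hl])
    _ = 3 * ‖((l : ℂ) - z)⁻¹‖ := by rw [norm_inv, inv_div, div_eq_mul_inv]

theorem integrable_inv_ofReal_sub {μ : Measure ℝ} [IsFiniteMeasure μ] (hg : 0 < g)
    (hμ : ∀ᵐ l ∂μ, E + g ≤ l) (hz : ‖z - E‖ ≤ g / 2) :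
    Integrable (fun l : ℝ ↦ ((l : ℂ) - z)⁻¹) μ := by
  refine .of_bound (by fun_prop) (g / 2)⁻¹ (hμ.mono fun l hl ↦ ?_)
  rw [norm_inv]
  exact inv_anti₀ (by positivity) (half_gap_le_norm_ofReal_sub hz hl)

end SpectralGap

/-- Let `E ∈ ℝ`, `g > 0`, and let `μ` be a finite Borel measure on `ℝ`
supported in `[E + g, ∞)` (i.e. `μ (Iio (E+g)) = 0`). Then for all `z, z' ∈ ℂ` with
`|z − E| ≤ g/2` and `|z' − E| ≤ g/2`:
`∫ |λ − z'|⁻¹ dμ(λ) ≤ 6·|∫ (λ − z)⁻¹ dμ(λ)|`. -/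
theorem stmt_4 (E g : ℝ) (hg : 0 < g)
    (μ : Measure ℝ) [IsFiniteMeasure μ]
    (hsupp : μ (Set.Iio (E + g)) = 0)
    (z z' : ℂ) (hz : ‖z - (E : ℂ)‖ ≤ g / 2)
    (hz' : ‖z' - (E : ℂ)‖ ≤ g / 2) :
    ∫ l, ‖(l : ℂ) - z'‖⁻¹ ∂μ ≤ 6 * ‖∫ l, ((l : ℂ) - z)⁻¹ ∂μ‖ := by
  have hμ : ∀ᵐ l ∂μ, E + g ≤ l :=
    (measure_eq_zero_iff_ae_notMem.mp hsupp).mono fun _ ↦ Set.notMem_Iio.mp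
  have hint := integrable_inv_ofReal_sub hg hμ hz
  calc ∫ l, ‖(l : ℂ) - z'‖⁻¹ ∂μ
      ≤ ∫ l, 3 * ‖((l : ℂ) - z)⁻¹‖ ∂μ := by
        refine integral_mono_ae ?_ (hint.norm.const_mul 3)
          (hμ.mono fun l hl ↦ inv_norm_ofReal_sub_le_three_mul_norm_inv hg hz hz' hl)
        simpa only [norm_inv] using (integrable_inv_ofReal_sub hg hμ hz').norm
    _ = 3 * ∫ l, ‖((l : ℂ) - z)⁻¹‖ ∂μ := integral_const_mul 3 _
    _ ≤ 3 * (2 * ‖∫ l, ((l : ℂ) - z)⁻¹ ∂μ‖) := by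
        gcongr
        exact integral_norm_le_two_mul_norm_integral_of_abs_im_le_re hint <| hμ.mono fun l hl ↦
          Complex.abs_im_inv_le_re_inv_of_abs_im_le_re (abs_im_ofReal_sub_le_re hz hl)
    _ = 6 * ‖∫ l, ((l : ℂ) - z)⁻¹ ∂μ‖ := by ring
end
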